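/- Under the same intersection hypothesis, if a set-valued function F on a compact metric space is topologically weakly mixing, then F is totally transitive, i.e., F^n is topologically transitive for every n ∈ ℕ. -/
import Mathlib

/-- An orbit of `x` under the set-valued function `F`. -/
def IsOrbit {X : Type*} (F : X → Set X) (x : X) (o : ℕ → X) : Prop :=
  o 0 = x ∧ ∀ i : ℕ, o (i + 1) ∈ F (o i)

/-- Topological transitivity for a set-valued function. -/
def TopTransitive {X : Type*} [TopologicalSpace X] (F : X → Set X) : Prop :=
  ∀ U V : Set X, IsOpen U → IsOpen V → U.Nonempty → V.Nonempty →
    ∃ (m : ℕ) (x : X) (o : ℕ → X), x ∈ U ∧ IsOrbit F x o ∧ o m ∈ V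

/-- Topological mixing for a set-valued function. -/
def TopMixing {X : Type*} [TopologicalSpace X] (F : X → Set X) : Prop :=
  ∀ U V : Set X, IsOpen U → IsOpen V → U.Nonempty → V.Nonempty →
    ∃ M : ℕ, ∀ m : ℕ, m > M →
      ∃ (x : X) (o : ℕ → X), x ∈ U ∧ IsOrbit F x o ∧ o m ∈ V

/-- Upper semicontinuity of a set-valued function. -/
def UscSV {X : Type*} [TopologicalSpace X] (F : X → Set X) : Prop :=
  ∀ x : X, ∀ V : Set X, IsOpen V → F x ⊆ V →
    ∃ U : Set X, IsOpen U ∧ x ∈ U ∧ ∀ t ∈ U, F t ⊆ V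

/-- `SVIter F n x` is the set `F^n(x)`, with `F^{n+1} = F ∘ F^n`. -/
def SVIter {X : Type*} (F : X → Set X) : ℕ → X → Set X
  | 0, x => {x}
  | n + 1, x => ⋃ y ∈ SVIter F n x, F y

/-- The image `F(A)` of a set under a set-valued function. -/
def SVImage {X : Type*} (F : X → Set X) (A : Set X) : Set X := ⋃ x ∈ A, F x

/-- The set of points of `U` having an orbit entering `V` at time `n`. -/
def EnterSet {X : Type*} (F : X → Set X) (U V : Set X) (n : ℕ) : Set X :=
  {x ∈ U | ∃ o : ℕ → X, IsOrbit F x o ∧ o n ∈ V}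

section AuxResid

variable {n : ℕ} [NeZero n]

omit [NeZero n] in
lemma SVaux.shift_card (σ : ZMod n) (R : Finset (ZMod n)) :
    (R.image (σ + ·)).card = R.card :=
  Finset.card_image_of_injective _ (add_right_injective σ)

omit [NeZero n] in
lemma SVaux.union_grow {R A : Finset (ZMod n)} (hcard : A.card = R.card) (hne : A ≠ R) :
    R.card + 1 ≤ (R ∪ A).card := by
  have hns : ¬ A ⊆ R := fun hs => hne (Finset.eq_of_subset_of_card_le hs (le_of_eq hcard.symm))
  obtain ⟨x, hxA, hxR⟩ := Finset.not_subset.mp hns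
  calc R.card + 1 = (insert x R).card := (Finset.card_insert_of_notMem hxR).symm
    _ ≤ (R ∪ A).card :=
      Finset.card_le_card (Finset.insert_subset (Finset.mem_union_right _ hxA)
        Finset.subset_union_left)

lemma SVaux.shift_full {R : Finset (ZMod n)} (hne : R.Nonempty)
    (h : R.image ((1 : ZMod n) + ·) = R) : R = Finset.univ := by
  have key : ∀ k : ℕ, ∀ r ∈ R, ((k : ZMod n) + r) ∈ R := by
    intro k
    induction k with
    | zero => intro r hr; simpa using hr
    | succ k ih =>
      intro r hr
      have h1 : (1 : ZMod n) + ((k : ZMod n) + r) ∈ R := by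
        rw [← h]; exact Finset.mem_image_of_mem _ (ih r hr)
      have heq : ((k + 1 : ℕ) : ZMod n) + r = 1 + ((k : ZMod n) + r) := by push_cast; ring
      rw [heq]; exact h1
  apply Finset.eq_univ_iff_forall.mpr
  intro y
  obtain ⟨r, hr⟩ := hne
  have hv : (((y - r).val : ℕ) : ZMod n) = y - r := ZMod.natCast_rightInverse (y - r)
  have := key (y - r).val r hr
  rw [hv, sub_add_cancel] at this
  exact this

lemma SVaux.resid_grow {R : Finset (ZMod n)} (hne : R.Nonempty) (hlt : R.card < n)
    (σ τ : ZMod n) :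
    R.card + 1 ≤ ((R ∪ R.image (σ + ·)) ∪ (R.image (τ + ·) ∪ R.image ((τ + σ + 1) + ·))).card := by
  by_cases h : R.image (σ + ·) = R
  · have h1 : R.image ((σ + 1) + ·) ≠ R := by
      intro heq
      have hcomp : (R.image ((1 : ZMod n) + ·)).image (σ + ·) = R.image ((σ + 1) + ·) := by
        rw [Finset.image_image]; congr 1; funext x; show σ + (1 + x) = (σ + 1) + x; ring
      have h1R : R.image ((1 : ZMod n) + ·) = R := by
        apply Finset.image_injective (add_right_injective σ)
        rw [hcomp, heq, h]
      have hu := SVaux.shift_full hne h1R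
      rw [hu, Finset.card_univ, ZMod.card] at hlt
      omega
    have key : R.card + 1 ≤ (R ∪ R.image ((σ + 1) + ·)).card :=
      SVaux.union_grow (SVaux.shift_card _ _) h1
    have himg : (R ∪ R.image ((σ + 1) + ·)).image (τ + ·)
        ⊆ R.image (τ + ·) ∪ R.image ((τ + σ + 1) + ·) := by
      rw [Finset.image_union, Finset.image_image]
      apply Finset.union_subset_union (le_refl _)
      have : ((τ + ·) ∘ ((σ + 1) + ·)) = (((τ + σ + 1) + ·) : ZMod n → ZMod n) := by
        funext x; show τ + ((σ + 1) + x) = (τ + σ + 1) + x; ring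
      rw [this]
    calc R.card + 1 ≤ (R ∪ R.image ((σ + 1) + ·)).card := key
      _ = ((R ∪ R.image ((σ + 1) + ·)).image (τ + ·)).card :=
          (Finset.card_image_of_injective _ (add_right_injective τ)).symm
      _ ≤ (R.image (τ + ·) ∪ R.image ((τ + σ + 1) + ·)).card := Finset.card_le_card himg
      _ ≤ _ := Finset.card_le_card Finset.subset_union_right
  · exact le_trans (SVaux.union_grow (SVaux.shift_card σ R) h)
      (Finset.card_le_card Finset.subset_union_left)

end AuxResid

section AuxDyn

variable {X : Type*} (F : X → Set X)

/-- Concatenation of orbits: if `x` reaches `A` at time `a` and every point of `A`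
reaches `B` at time `b`, then `x` reaches `B` at time `a + b`. -/
lemma SVaux.reach_concat {x : X} {A B : Set X} {a b : ℕ}
    (h1 : ∃ o, IsOrbit F x o ∧ o a ∈ A)
    (h2 : ∀ y ∈ A, ∃ o, IsOrbit F y o ∧ o b ∈ B) :
    ∃ o, IsOrbit F x o ∧ o (a + b) ∈ B := by
  obtain ⟨o, ⟨ho0, ho⟩, hA⟩ := h1
  obtain ⟨o', ⟨ho0', ho'⟩, hB⟩ := h2 _ hA
  refine ⟨fun i => if i < a then o i else o' (i - a), ⟨?_, ?_⟩, ?_⟩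
  · by_cases h : 0 < a
    · simp [h, ho0]
    · have ha : a = 0 := by omega
      simp [ha, ho0', ho0]
  · intro i
    by_cases h1' : i + 1 < a
    · have h2' : i < a := by omega
      simp only [if_pos h1', if_pos h2']
      exact ho i
    · by_cases h2' : i < a
      · have ha : a = i + 1 := by omega
        simp only [if_neg h1', if_pos h2']
        have he : i + 1 - a = 0 := by omega
        rw [he, ho0', ha]
        exact ho i
      · simp only [if_neg h1', if_neg h2']
        have he : i + 1 - a = (i - a) + 1 := by omega
        rw [he]
        exact ho' (i - a)
  · have h : ¬ (a + b < a) := by omega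
    simp only [if_neg h]
    have he : a + b - a = b := by omega
    rw [he]
    exact hB

variable [MetricSpace X]

/-- From weak mixing: a common time for two transitivity requirements. -/
lemma SVaux.pair_trans (hwm : TopTransitive (fun p : X × X => (F p.1) ×ˢ (F p.2)))
    {A B C D : Set X} (hA : IsOpen A) (hB : IsOpen B) (hC : IsOpen C) (hD : IsOpen D)
    (hA' : A.Nonempty) (hB' : B.Nonempty) (hC' : C.Nonempty) (hD' : D.Nonempty) :
    ∃ s, (EnterSet F A C s).Nonempty ∧ (EnterSet F B D s).Nonempty := by
  obtain ⟨m, p, O, hp, ⟨hO0, hO⟩, hm⟩ :=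
    hwm (A ×ˢ B) (C ×ˢ D) (hA.prod hB) (hC.prod hD) (hA'.prod hB') (hC'.prod hD')
  refine ⟨m, ⟨p.1, hp.1, fun i => (O i).1, ⟨congrArg Prod.fst hO0, fun i => (hO i).1⟩, hm.1⟩,
    ⟨p.2, hp.2, fun i => (O i).2, ⟨congrArg Prod.snd hO0, fun i => (hO i).2⟩, hm.2⟩⟩

/-- Some point has an orbit entering `W` at time exactly 1. -/
lemma SVaux.star (hwm : TopTransitive (fun p : X × X => (F p.1) ×ˢ (F p.2)))
    {W : Set X} (hW : IsOpen W) (hWne : W.Nonempty) :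
    ∃ x, ∃ o, IsOrbit F x o ∧ o 1 ∈ W := by
  by_cases hs : ∃ a b : X, a ≠ b
  · obtain ⟨a, b, hab⟩ := hs
    have hd : 0 < dist a b := dist_pos.mpr hab
    set A := Metric.ball a (dist a b / 2) with hAdef
    set B := Metric.ball b (dist a b / 2) with hBdef
    have hdisj : ∀ x : X, x ∈ A → x ∈ B → False := by
      intro x hxA hxB
      have h1 : dist x a < dist a b / 2 := Metric.mem_ball.mp hxA
      have h2 : dist x b < dist a b / 2 := Metric.mem_ball.mp hxB
      have := dist_triangle a x b
      rw [dist_comm a x] at this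
      linarith
    obtain ⟨m, p, O, hp, ⟨hO0, hO⟩, hm⟩ :=
      hwm (W ×ˢ A) (W ×ˢ B) (hW.prod Metric.isOpen_ball) (hW.prod Metric.isOpen_ball)
        (hWne.prod ⟨a, Metric.mem_ball_self (by linarith)⟩)
        (hWne.prod ⟨b, Metric.mem_ball_self (by linarith)⟩)
    have hmne : m ≠ 0 := by
      intro h0
      rw [h0, hO0] at hm
      exact hdisj p.2 hp.2 hm.2
    refine ⟨(O (m - 1)).1, fun i => (O (m - 1 + i)).1, ⟨rfl, fun i => ?_⟩, ?_⟩
    · show (O (m - 1 + (i + 1))).1 ∈ F ((O (m - 1 + i)).1)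
      have he : m - 1 + (i + 1) = (m - 1 + i) + 1 := by omega
      rw [he]
      exact (hO (m - 1 + i)).1
    · show (O (m - 1 + 1)).1 ∈ W
      have he : m - 1 + 1 = m := by omega
      rw [he]
      exact hm.1
  · push_neg at hs
    obtain ⟨s, hne1, -⟩ := SVaux.pair_trans F hwm hW hW hW hW hWne hWne hWne hWne
    obtain ⟨x, hxW, o, ho, -⟩ := hne1
    exact ⟨x, o, ho, by rw [hs (o 1) x]; exact hxW⟩

/-- From anywhere (`univ`), every nonempty open set is reachable at every exact time. -/
lemma SVaux.chain (hwm : TopTransitive (fun p : X × X => (F p.1) ×ˢ (F p.2)))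
    (hint : ∀ U V : Set X, IsOpen U → IsOpen V → ∀ n : ℕ,
      (EnterSet F U V n).Nonempty →
        ∃ W : Set X, IsOpen W ∧ W.Nonempty ∧ W ⊆ EnterSet F U V n)
    {B : Set X} (hB : IsOpen B) (hBne : B.Nonempty) :
    ∀ c : ℕ, (EnterSet F Set.univ B c).Nonempty := by
  intro c
  induction c with
  | zero =>
    obtain ⟨s, hne1, -⟩ := SVaux.pair_trans F hwm hB hB hB hB hBne hBne hBne hBne
    obtain ⟨x, hxB, o, ho, -⟩ := hne1
    exact ⟨x, Set.mem_univ x, o, ho, by rw [ho.1]; exact hxB⟩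
  | succ c ih =>
    obtain ⟨W, hWo, hWne, hWsub⟩ := hint Set.univ B isOpen_univ hB c ih
    obtain ⟨x, o, ho, h1⟩ := SVaux.star F hwm hWo hWne
    have hreach : ∃ o, IsOrbit F x o ∧ o (1 + c) ∈ B :=
      SVaux.reach_concat F ⟨o, ho, h1⟩ (fun y hy => (hWsub hy).2)
    obtain ⟨o', ho', hB'⟩ := hreach
    refine ⟨x, Set.mem_univ x, o', ho', ?_⟩
    have : 1 + c = c + 1 := by omega
    rwa [this] at hB'

end AuxDyn

theorem totally_transitive_of_weakly_mixing {X : Type*} [MetricSpace X] [CompactSpace X]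
    (F : X → Set X)
    (hint : ∀ U V : Set X, IsOpen U → IsOpen V → ∀ n : ℕ,
      (EnterSet F U V n).Nonempty →
        ∃ W : Set X, IsOpen W ∧ W.Nonempty ∧ W ⊆ EnterSet F U V n)
    (hwm : TopTransitive (fun p : X × X => (F p.1) ×ˢ (F p.2))) :
    ∀ n : ℕ, 1 ≤ n →
      ∀ U V : Set X, IsOpen U → IsOpen V → U.Nonempty → V.Nonempty →
        ∃ (m : ℕ) (x : X) (o : ℕ → X), x ∈ U ∧ IsOrbit F x o ∧ o (m * n) ∈ V := by
  intro n hn U V hU hV hUne hVne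
  haveI : NeZero n := ⟨by omega⟩
  -- the main invariant: a nonempty open `Q ⊆ U` all of whose points reach `V` at each time
  -- in a finite set `T`, whose set of residues mod `n` has at least `min n (k+1)` elements.
  have main : ∀ k : ℕ, ∃ (Q : Set X) (T : Finset ℕ), IsOpen Q ∧ Q.Nonempty ∧ Q ⊆ U ∧
      (∀ t ∈ T, ∀ x ∈ Q, ∃ o, IsOrbit F x o ∧ o t ∈ V) ∧
      min n (k + 1) ≤ (T.image (fun t : ℕ => (t : ZMod n))).card := by
    intro k
    induction k with
    | zero =>
      -- initial step
      obtain ⟨C0, hC0o, hC0ne, hC0sub⟩ :=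
        hint Set.univ V isOpen_univ hV 0 (SVaux.chain F hwm hint hV hVne 0)
      obtain ⟨s0, hne1, -⟩ := SVaux.pair_trans F hwm hU hU hC0o hC0o hUne hUne hC0ne hC0ne
      obtain ⟨Q0, hQ0o, hQ0ne, hQ0sub⟩ := hint U C0 hU hC0o s0 hne1
      refine ⟨Q0, {s0}, hQ0o, hQ0ne, fun x hx => (hQ0sub hx).1, ?_, ?_⟩
      · intro t ht x hx
        rw [Finset.mem_singleton] at ht
        have h1 : ∃ o, IsOrbit F x o ∧ o (s0 + 0) ∈ V :=
          SVaux.reach_concat F (hQ0sub hx).2 (fun y hy => (hC0sub hy).2)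
        rw [ht]
        simpa using h1
      · simp
    | succ k ih =>
      obtain ⟨Q, T, hQo, hQne, hQU, hTreach, hcard⟩ := ih
      by_cases hfull : n ≤ (T.image (fun t : ℕ => (t : ZMod n))).card
      · exact ⟨Q, T, hQo, hQne, hQU, hTreach, le_trans (min_le_left _ _) hfull⟩
      · push_neg at hfull
        -- one round of growth
        obtain ⟨D1, hD1o, hD1ne, hD1sub⟩ :=
          hint Set.univ Q isOpen_univ hQo n (SVaux.chain F hwm hint hQo hQne n)
        obtain ⟨D2, hD2o, hD2ne, hD2sub⟩ :=
          hint Set.univ Q isOpen_univ hQo (n + 1) (SVaux.chain F hwm hint hQo hQne (n + 1))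
        obtain ⟨s1, hsa, hsb⟩ :=
          SVaux.pair_trans F hwm hQo hQo hD1o hD2o hQne hQne hD1ne hD2ne
        obtain ⟨Q1, hQ1o, hQ1ne, hQ1sub⟩ := hint Q D1 hQo hD1o s1 hsa
        obtain ⟨Q2, hQ2o, hQ2ne, hQ2sub⟩ := hint Q D2 hQo hD2o s1 hsb
        obtain ⟨E, hEo, hEne, hEsub⟩ :=
          hint Set.univ Q2 isOpen_univ hQ2o n (SVaux.chain F hwm hint hQ2o hQ2ne n)
        obtain ⟨s2, hs2a, -⟩ :=
          SVaux.pair_trans F hwm hQ1o hQ1o hEo hEo hQ1ne hQ1ne hEne hEne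
        obtain ⟨Qn, hQno, hQnne, hQnsub⟩ := hint Q1 E hQ1o hEo s2 hs2a
        -- reach facts
        have hQn_Q1 : Qn ⊆ Q1 := fun x hx => (hQnsub hx).1
        have hQ1_Q : Q1 ⊆ Q := fun x hx => (hQ1sub hx).1
        have hQ2_Q : Q2 ⊆ Q := fun x hx => (hQ2sub hx).1
        have hQn_Q : Qn ⊆ Q := fun x hx => hQ1_Q (hQn_Q1 hx)
        -- new time set
        refine ⟨Qn, (T ∪ T.image ((s1 + n) + ·)) ∪
            (T.image ((s2 + n) + ·) ∪ T.image (((s2 + n) + (s1 + n) + 1) + ·)),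
          hQno, hQnne, fun x hx => hQU (hQn_Q hx), ?_, ?_⟩
        · intro t ht x hx
          simp only [Finset.mem_union, Finset.mem_image] at ht
          rcases ht with (ht | ⟨u, hu, rfl⟩) | (⟨u, hu, rfl⟩ | ⟨u, hu, rfl⟩)
          · exact hTreach t ht x (hQn_Q hx)
          · -- via Q1 → D1 → Q → V : time s1 + (n + u)
            have h1 : ∃ o, IsOrbit F x o ∧ o (s1 + (n + u)) ∈ V :=
              SVaux.reach_concat F (hQ1sub (hQn_Q1 hx)).2
                (fun y hy => SVaux.reach_concat F (hD1sub hy).2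
                  (fun z hz => hTreach u hu z hz))
            have he : s1 + (n + u) = (s1 + n) + u := by omega
            rwa [he] at h1
          · -- via Qn → E → Q2 → V : time s2 + (n + u)
            have h1 : ∃ o, IsOrbit F x o ∧ o (s2 + (n + u)) ∈ V :=
              SVaux.reach_concat F (hQnsub hx).2
                (fun y hy => SVaux.reach_concat F (hEsub hy).2
                  (fun z hz => hTreach u hu z (hQ2_Q hz)))
            have he : s2 + (n + u) = (s2 + n) + u := by omega
            rwa [he] at h1
          · -- via Qn → E → Q2 → D2 → Q → V : time s2 + (n + (s1 + ((n+1) + u)))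
            have h1 : ∃ o, IsOrbit F x o ∧ o (s2 + (n + (s1 + ((n + 1) + u)))) ∈ V :=
              SVaux.reach_concat F (hQnsub hx).2
                (fun y hy => SVaux.reach_concat F (hEsub hy).2
                  (fun z hz => SVaux.reach_concat F (hQ2sub hz).2
                    (fun w hw => SVaux.reach_concat F (hD2sub hw).2
                      (fun v hv => hTreach u hu v hv))))
            have he : s2 + (n + (s1 + ((n + 1) + u))) = ((s2 + n) + (s1 + n) + 1) + u := by omega
            rwa [he] at h1
        · -- cardinality growth
          have hTne : (T.image (fun t : ℕ => (t : ZMod n))).Nonempty := by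
            have h1 : 1 ≤ min n (k + 1) := le_min hn (by omega)
            have := le_trans h1 hcard
            exact Finset.card_pos.mp (by omega)
          have hgrow := SVaux.resid_grow hTne hfull ((s1 + n : ℕ) : ZMod n) ((s2 + n : ℕ) : ZMod n)
          -- identify image of the new T with the union of shifted images
          have e1 : (T.image ((s1 + n) + ·)).image (fun t : ℕ => (t : ZMod n))
              = (T.image (fun t : ℕ => (t : ZMod n))).image (((s1 + n : ℕ) : ZMod n) + ·) := by
            rw [Finset.image_image, Finset.image_image]
            congr 1
            funext t
            show (((s1 + n) + t : ℕ) : ZMod n) = ((s1 + n : ℕ) : ZMod n) + (t : ZMod n)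
            push_cast; ring
          have e2 : (T.image ((s2 + n) + ·)).image (fun t : ℕ => (t : ZMod n))
              = (T.image (fun t : ℕ => (t : ZMod n))).image (((s2 + n : ℕ) : ZMod n) + ·) := by
            rw [Finset.image_image, Finset.image_image]
            congr 1
            funext t
            show (((s2 + n) + t : ℕ) : ZMod n) = ((s2 + n : ℕ) : ZMod n) + (t : ZMod n)
            push_cast; ring
          have e3 : (T.image (((s2 + n) + (s1 + n) + 1) + ·)).image (fun t : ℕ => (t : ZMod n))
              = (T.image (fun t : ℕ => (t : ZMod n))).image
                  ((((s2 + n : ℕ) : ZMod n) + ((s1 + n : ℕ) : ZMod n) + 1) + ·) := by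
            rw [Finset.image_image, Finset.image_image]
            congr 1
            funext t
            show ((((s2 + n) + (s1 + n) + 1) + t : ℕ) : ZMod n)
              = (((s2 + n : ℕ) : ZMod n) + ((s1 + n : ℕ) : ZMod n) + 1) + (t : ZMod n)
            push_cast; ring
          have himg : (((T ∪ T.image ((s1 + n) + ·)) ∪
              (T.image ((s2 + n) + ·) ∪ T.image (((s2 + n) + (s1 + n) + 1) + ·))).image
                (fun t : ℕ => (t : ZMod n)))
              = ((T.image (fun t : ℕ => (t : ZMod n)) ∪
                  (T.image (fun t : ℕ => (t : ZMod n))).image (((s1 + n : ℕ) : ZMod n) + ·)) ∪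
                 ((T.image (fun t : ℕ => (t : ZMod n))).image (((s2 + n : ℕ) : ZMod n) + ·) ∪
                  (T.image (fun t : ℕ => (t : ZMod n))).image
                    ((((s2 + n : ℕ) : ZMod n) + ((s1 + n : ℕ) : ZMod n) + 1) + ·))) := by
            rw [Finset.image_union, Finset.image_union, Finset.image_union, e1, e2, e3]
          rw [himg]
          calc min n (k + 1 + 1) ≤ min n (k + 1) + 1 := by omega
            _ ≤ (T.image (fun t : ℕ => (t : ZMod n))).card + 1 := by omega
            _ ≤ _ := hgrow
  -- finish: at k = n - 1 all residues are present
  obtain ⟨Q, T, hQo, hQne, hQU, hTreach, hcard⟩ := main (n - 1)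
  have hm : min n (n - 1 + 1) = n := by omega
  rw [hm] at hcard
  have hle : (T.image (fun t : ℕ => (t : ZMod n))).card ≤ n := by
    have h1 := Finset.card_le_univ (T.image (fun t : ℕ => (t : ZMod n)))
    rwa [ZMod.card] at h1
  have hcardeq : (T.image (fun t : ℕ => (t : ZMod n))).card = Fintype.card (ZMod n) := by
    rw [ZMod.card]; omega
  have huniv := Finset.eq_univ_of_card _ hcardeq
  have h0 : (0 : ZMod n) ∈ T.image (fun t : ℕ => (t : ZMod n)) := by
    rw [huniv]; exact Finset.mem_univ 0
  obtain ⟨t, htT, ht0⟩ := Finset.mem_image.mp h0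
  have hdvd : n ∣ t := (ZMod.natCast_eq_zero_iff t n).mp ht0
  obtain ⟨m, hm'⟩ := hdvd
  obtain ⟨x, hx⟩ := hQne
  obtain ⟨o, ho, hoV⟩ := hTreach t htT x hx
  refine ⟨m, x, o, hQU hx, ho, ?_⟩
  have hmn : m * n = t := by rw [hm', Nat.mul_comm]
  rwa [hmn]
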